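/- arXiv:1806.08264 — 5 statements merged into one kernel-verified Lean document; each statement's English description precedes it below -/
import Mathlib

section
/- For every lattice dimension d ≥ 3, the function p ↦ 1/E(p) is integrable on the cube (−π,π]^d ⊂ ℝ^d; in particular the integral ∫_{(−π,π]^d} dp / E(p) is finite. -/
/-!
On the cube, `1 - cos t ≥ 2 t² / π²` gives `E(p) ≥ 2 ‖p‖² / π²`, so `1 / E` is dominated by a
multiple of `‖p‖⁻²`, which is locally integrable on `ℝ^d` because `2 < d`. The norm on `ι → ℝ`
is the sup norm, so `closedBall 0 π` is the closed cube `[-π, π]^d`.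
-/

open MeasureTheory Real Metric

lemma one_sub_cos_nonneg (x : ℝ) : 0 ≤ 1 - cos x :=
  sub_nonneg.2 (cos_le_one x)

variable {ι : Type*} [Fintype ι]

lemma sum_one_sub_cos_nonneg (p : ι → ℝ) : 0 ≤ ∑ j, (1 - cos (p j)) :=
  Finset.sum_nonneg fun j _ => one_sub_cos_nonneg (p j)

lemma two_div_pi_sq_mul_sq_norm_le_sum_one_sub_cos {p : ι → ℝ} (hp : ‖p‖ ≤ π) :
    2 / π ^ 2 * ‖p‖ ^ 2 ≤ ∑ j, (1 - cos (p j)) := by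
  set S := ∑ j, (1 - cos (p j))
  have hcoord : ∀ j, p j ^ 2 ≤ π ^ 2 / 2 * S := fun j => by
    have hcos := cos_le_one_sub_mul_cos_sq ((norm_le_pi_norm p j).trans hp)
    have hterm : 1 - cos (p j) ≤ S :=
      Finset.single_le_sum (fun i _ => one_sub_cos_nonneg (p i)) (Finset.mem_univ j)
    calc p j ^ 2 = π ^ 2 / 2 * (2 / π ^ 2 * p j ^ 2) := by field_simp
      _ ≤ π ^ 2 / 2 * S := by gcongr; linarith
  have hnorm : ‖p‖ ≤ √(π ^ 2 / 2 * S) :=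
    (pi_norm_le_iff_of_nonneg (sqrt_nonneg _)).2 fun j => abs_le_sqrt (hcoord j)
  have hsq : ‖p‖ ^ 2 ≤ π ^ 2 / 2 * S :=
    (le_sqrt (norm_nonneg p) (mul_nonneg (by positivity) (sum_one_sub_cos_nonneg p))).1 hnorm
  calc 2 / π ^ 2 * ‖p‖ ^ 2 ≤ 2 / π ^ 2 * (π ^ 2 / 2 * S) := by gcongr
    _ = S := by field_simp

lemma one_div_sum_one_sub_cos_le {p : ι → ℝ} (hp : ‖p‖ ≤ π) :
    1 / ∑ j, (1 - cos (p j)) ≤ π ^ 2 / 2 * ‖p‖ ^ (-2 : ℝ) := by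
  rcases eq_or_ne p 0 with rfl | hp0
  · -- both sides are junk values: `1 / 0 = 0` and `0 ^ (-2) = 0`
    simp
  have hp0 := norm_pos_iff.2 hp0
  calc 1 / ∑ j, (1 - cos (p j)) ≤ 1 / (2 / π ^ 2 * ‖p‖ ^ 2) :=
        one_div_le_one_div_of_le (by positivity)
          (two_div_pi_sq_mul_sq_norm_le_sum_one_sub_cos hp)
    _ = π ^ 2 / 2 * ‖p‖ ^ (-2 : ℝ) := by
        rw [rpow_neg hp0.le, rpow_two]
        field_simp

theorem integrableOn_closedBall_one_div_sum_one_sub_cos (hι : 2 < Fintype.card ι) :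
    IntegrableOn (fun p : ι → ℝ => 1 / ∑ j, (1 - cos (p j))) (closedBall 0 π) := by
  set f := fun p : ι → ℝ => 1 / ∑ j, (1 - cos (p j))
  have hdim : 2 < Module.finrank ℝ (ι → ℝ) := by
    rwa [Module.finrank_fintype_fun_eq_card]
  have hbound : ∀ p, ‖(closedBall 0 π).indicator f p‖ ≤ π ^ 2 / 2 * ‖p‖ ^ (-2 : ℝ) := by
    intro p
    by_cases hp : p ∈ closedBall (0 : ι → ℝ) π
    · rw [Set.indicator_of_mem hp, norm_of_nonneg (one_div_nonneg.2 (sum_one_sub_cos_nonneg p))]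
      exact one_div_sum_one_sub_cos_le (mem_closedBall_zero_iff.1 hp)
    · rw [Set.indicator_of_notMem hp, norm_zero]
      positivity
  have hloc : LocallyIntegrable ((closedBall 0 π).indicator f) :=
    locallyIntegrable_of_norm_le_rpow (by omega) (by exact_mod_cast hdim)
      (Filter.Eventually.of_forall hbound)
      ((Measurable.indicator (by fun_prop) measurableSet_closedBall).aestronglyMeasurable)
  have := hloc.integrableOn_isCompact (isCompact_closedBall 0 π)
  rwa [integrableOn_indicator_iff measurableSet_closedBall, Set.inter_self] at this

/-- For a lattice dimension `d ≥ 3`, the function `p ↦ 1 / E(p)`,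
where `E(p) = ∑_{j} (1 - cos p_j)`, is integrable on the cube `(-π, π]^d`. -/
theorem one_div_E_integrableOn (d : ℕ) (hd : 3 ≤ d) :
    IntegrableOn
      (fun p : Fin d → ℝ => 1 / (∑ j : Fin d, (1 - Real.cos (p j))))
      (Set.univ.pi fun _ : Fin d => Set.Ioc (-Real.pi) Real.pi)
      volume := by
  have hcard : 2 < Fintype.card (Fin d) := by rw [Fintype.card_fin]; omega
  refine (integrableOn_closedBall_one_div_sum_one_sub_cos hcard).mono_set fun p hp => ?_
  rw [mem_closedBall_zero_iff, pi_norm_le_iff_of_nonneg pi_pos.le]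
  exact fun j => abs_le.2 ⟨(hp j trivial).1.le, (hp j trivial).2⟩
end

section
/- For every d ≥ 3 one has θ(d) > 1, where θ(d) = (d/(2π)^d) ∫_{(−π,π]^d} dp / E(p). -/
/-!
Write `B = (-π, π]^d` and `E(p) = ∑ⱼ (1 - cos pⱼ)`. Integrating the pointwise inequality
`d² / E - 2d + E = (E - d)² / E ≥ 0` over `B` (Cauchy–Schwarz in disguise) and using
`∫_B E = d |B|` gives `d² ∫_B 1/E ≥ d |B|`, i.e. `θ(d) ≥ 1`. Equality would force `E = d`
almost everywhere on `B`, which fails near `0`, where `E < d`.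

The integrability of `1/E` for `d ≥ 3` comes from `E(p) ≥ (2/π²) ‖p‖²` on `B`: the singularity
at the origin is at most `‖p‖⁻²`, which is locally integrable in dimension greater than `2`.
-/

open MeasureTheory Real Set Filter

def brillouinZone (ι : Type*) : Set (ι → ℝ) := univ.pi fun _ => Ioc (-π) π

/-- The function `E` of the statement. -/
noncomputable def laplacianSymbol {ι : Type*} [Fintype ι] (p : ι → ℝ) : ℝ :=
  ∑ j, (1 - cos (p j))

theorem two_mul_measureReal_sub_integral_lt_sq_mul_integral_one_div {α : Type*}
    [MeasurableSpace α] {μ : Measure α} [IsFiniteMeasure μ] {f : α → ℝ} {c : ℝ}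
    (hf : Integrable f μ) (hf_inv : Integrable (fun x => 1 / f x) μ)
    (hf_pos : ∀ᵐ x ∂μ, 0 < f x) (hfc : ¬ f =ᵐ[μ] fun _ => c) :
    2 * c * μ.real univ - ∫ x, f x ∂μ < c ^ 2 * ∫ x, 1 / f x ∂μ := by
  set g : α → ℝ := fun x => c ^ 2 * (1 / f x) - 2 * c + f x
  have hg_eq : ∀ᵐ x ∂μ, g x = (f x - c) ^ 2 / f x := by
    filter_upwards [hf_pos] with x hx
    simp only [g]
    field_simp
    ring
  have hg_int : Integrable g μ := ((hf_inv.const_mul _).sub (integrable_const _)).add hf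
  have hg_nonneg : 0 ≤ᵐ[μ] g := by
    filter_upwards [hg_eq, hf_pos] with x hx hfx
    rw [Pi.zero_apply, hx]
    positivity
  have hg_pos : 0 < ∫ x, g x ∂μ := by
    refine (integral_nonneg_of_ae hg_nonneg).lt_of_ne fun h => hfc ?_
    filter_upwards [(integral_eq_zero_iff_of_nonneg_ae hg_nonneg hg_int).1 h.symm, hg_eq, hf_pos]
      with x hx0 hx hfx
    rw [Pi.zero_apply, hx, div_eq_zero_iff] at hx0
    rcases hx0 with hx0 | hx0
    · exact sub_eq_zero.1 ((pow_eq_zero_iff two_ne_zero).1 hx0)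
    · exact absurd hx0 hfx.ne'
  have hg_integral :
      ∫ x, g x ∂μ = c ^ 2 * ∫ x, 1 / f x ∂μ - 2 * c * μ.real univ + ∫ x, f x ∂μ := by
    rw [integral_add (f := fun x => c ^ 2 * (1 / f x) - 2 * c)
      ((hf_inv.const_mul _).sub (integrable_const _)) hf,
      integral_sub (hf_inv.const_mul _) (integrable_const _), integral_const_mul, integral_const,
      smul_eq_mul]
    ring
  linarith

section BrillouinZone

variable {ι : Type*}

theorem abs_le_pi_of_mem_brillouinZone {p : ι → ℝ} (hp : p ∈ brillouinZone ι) (j : ι) :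
    |p j| ≤ π :=
  abs_le.2 ⟨(hp j trivial).1.le, (hp j trivial).2⟩

variable [Fintype ι]

theorem measurableSet_brillouinZone : MeasurableSet (brillouinZone ι) :=
  MeasurableSet.univ_pi fun _ => measurableSet_Ioc

theorem ball_subset_brillouinZone {r : ℝ} (hr : r ≤ π) :
    Metric.ball (0 : ι → ℝ) r ⊆ brillouinZone ι := by
  intro p hp j _
  have := (norm_le_pi_norm p j).trans_lt (mem_ball_zero_iff.1 hp)
  rw [Real.norm_eq_abs, abs_lt] at this
  exact ⟨by linarith, by linarith⟩

theorem volume_brillouinZone :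
    volume (brillouinZone ι) = ENNReal.ofReal (2 * π) ^ Fintype.card ι := by
  rw [brillouinZone, volume_pi_pi, Real.volume_Ioc, Finset.prod_const, Finset.card_univ]
  ring_nf

theorem measureReal_brillouinZone : volume.real (brillouinZone ι) = (2 * π) ^ Fintype.card ι := by
  rw [measureReal_def, volume_brillouinZone, ENNReal.toReal_pow,
    ENNReal.toReal_ofReal (by positivity)]

instance isFiniteMeasure_restrict_brillouinZone :
    IsFiniteMeasure (volume.restrict (brillouinZone ι)) :=
  isFiniteMeasure_restrict.2 (by rw [volume_brillouinZone]; finiteness)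

theorem Continuous.integrableOn_brillouinZone {f : (ι → ℝ) → ℝ} (hf : Continuous f) :
    IntegrableOn f (brillouinZone ι) :=
  (hf.integrableOn_Icc (a := fun _ => -π) (b := fun _ => π)).mono_set <| by
    rw [← pi_univ_Icc]
    exact pi_mono fun _ _ => Ioc_subset_Icc_self

theorem setIntegral_one_sub_cos_brillouinZone (j : ι) :
    ∫ p in brillouinZone ι, (1 - cos (p j)) = (2 * π) ^ Fintype.card ι := by
  classical
  have hprod : (fun p : ι → ℝ => 1 - cos (p j)) =
      fun p => ∏ i, (fun i x => if i = j then 1 - cos x else 1) i (p i) := by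
    ext p
    rw [Finset.prod_ite_eq' Finset.univ j, if_pos (Finset.mem_univ j)]
  have h_one : ∫ x in Ioc (-π) π, (1 : ℝ) = 2 * π := by
    rw [setIntegral_const, measureReal_def, Real.volume_Ioc,
      ENNReal.toReal_ofReal (by linarith [pi_pos])]
    ring
  have h_cos : ∫ x in Ioc (-π) π, (1 - cos x) = 2 * π := by
    rw [← intervalIntegral.integral_of_le (by linarith [pi_pos]), intervalIntegral.integral_sub
      intervalIntegrable_const intervalIntegral.intervalIntegrable_cos, integral_cos]
    simp only [intervalIntegral.integral_const, smul_eq_mul, sin_pi, sin_neg]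
    ring
  rw [brillouinZone, volume_pi, Measure.restrict_pi_pi, hprod]
  refine (integral_fintype_prod_eq_prod (𝕜 := ℝ) (μ := fun _ => volume.restrict (Ioc (-π) π))
    fun i x => if i = j then 1 - cos x else 1).trans ?_
  rw [Finset.prod_eq_pow_card fun i _ => ?_, Finset.card_univ]
  split_ifs
  exacts [h_cos, h_one]

theorem continuous_laplacianSymbol : Continuous (laplacianSymbol (ι := ι)) := by
  unfold laplacianSymbol
  fun_prop

theorem laplacianSymbol_nonneg (p : ι → ℝ) : 0 ≤ laplacianSymbol p :=
  Finset.sum_nonneg fun j _ => sub_nonneg.2 (cos_le_one (p j))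

theorem one_sub_cos_le_laplacianSymbol (p : ι → ℝ) (j : ι) : 1 - cos (p j) ≤ laplacianSymbol p :=
  Finset.single_le_sum (fun i _ => sub_nonneg.2 (cos_le_one (p i))) (Finset.mem_univ j)

theorem mul_sq_norm_le_laplacianSymbol {p : ι → ℝ} (hp : p ∈ brillouinZone ι) :
    2 / π ^ 2 * ‖p‖ ^ 2 ≤ laplacianSymbol p := by
  have hcoord (j : ι) : p j ^ 2 ≤ π ^ 2 / 2 * laplacianSymbol p := by
    have h := (cos_le_one_sub_mul_cos_sq (abs_le_pi_of_mem_brillouinZone hp j))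
    have h' : 2 / π ^ 2 * p j ^ 2 ≤ laplacianSymbol p := by
      linarith [one_sub_cos_le_laplacianSymbol p j]
    calc p j ^ 2 = π ^ 2 / 2 * (2 / π ^ 2 * p j ^ 2) := by field_simp
      _ ≤ π ^ 2 / 2 * laplacianSymbol p := by gcongr
  have hnorm : ‖p‖ ≤ √(π ^ 2 / 2 * laplacianSymbol p) :=
    (pi_norm_le_iff_of_nonneg (sqrt_nonneg _)).2 fun j =>
      (norm_eq_abs (p j)).trans_le (abs_le_sqrt (hcoord j))
  have hsq := (Real.le_sqrt (norm_nonneg p)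
    (mul_nonneg (by positivity) (laplacianSymbol_nonneg p))).1 hnorm
  calc 2 / π ^ 2 * ‖p‖ ^ 2 ≤ 2 / π ^ 2 * (π ^ 2 / 2 * laplacianSymbol p) := by gcongr
    _ = laplacianSymbol p := by field_simp

theorem laplacianSymbol_pos {p : ι → ℝ} (hp : p ∈ brillouinZone ι) (hp0 : p ≠ 0) :
    0 < laplacianSymbol p :=
  (mul_sq_norm_le_laplacianSymbol hp).trans_lt' <| by
    have := norm_pos_iff.2 hp0
    positivity

theorem integrableOn_one_div_laplacianSymbol (hι : 2 < Fintype.card ι) :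
    IntegrableOn (fun p => 1 / laplacianSymbol p) (brillouinZone ι) := by
  set f := (brillouinZone ι).indicator fun p => 1 / laplacianSymbol p
  have hbound (p : ι → ℝ) : ‖f p‖ ≤ π ^ 2 / 2 * ‖p‖ ^ (-2 : ℝ) := by
    by_cases hp : p ∈ brillouinZone ι
    · rcases eq_or_ne p 0 with rfl | hp0
      · simp [f, laplacianSymbol]
      have hpos := norm_pos_iff.2 hp0
      have hE := laplacianSymbol_pos hp hp0
      calc ‖f p‖ = 1 / laplacianSymbol p := by
            simp only [f, indicator_of_mem hp, norm_of_nonneg (one_div_pos.2 hE).le]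
        _ ≤ 1 / (2 / π ^ 2 * ‖p‖ ^ 2) :=
            one_div_le_one_div_of_le (by positivity) (mul_sq_norm_le_laplacianSymbol hp)
        _ = π ^ 2 / 2 * ‖p‖ ^ (-2 : ℝ) := by
            rw [rpow_neg hpos.le, rpow_two]
            field_simp
    · simp only [f, indicator_of_notMem hp, norm_zero]
      positivity
  have hmeas : AEStronglyMeasurable f volume :=
    ((measurable_const.div continuous_laplacianSymbol.measurable).indicator
      measurableSet_brillouinZone).aestronglyMeasurable
  have hfinrank : Module.finrank ℝ (ι → ℝ) = Fintype.card ι :=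
    Module.finrank_fintype_fun_eq_card ℝ
  have hball : IntegrableOn f (Metric.ball 0 5) :=
    integrableOn_ball_of_norm_le_rpow (by omega) (by rw [hfinrank]; exact_mod_cast hι)
      (ae_of_all _ hbound) hmeas
  have hsub : brillouinZone ι ⊆ Metric.ball 0 5 := fun p hp =>
    mem_ball_zero_iff.2 <| (pi_norm_lt_iff (by norm_num)).2 fun j =>
      (norm_eq_abs _).trans_lt <|
        (abs_le_pi_of_mem_brillouinZone hp j).trans_lt (by linarith [pi_le_four])
  exact (hball.mono_set hsub).congr_fun (fun p hp => indicator_of_mem hp _)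
    measurableSet_brillouinZone

theorem setIntegral_laplacianSymbol :
    ∫ p in brillouinZone ι, laplacianSymbol p = Fintype.card ι * (2 * π) ^ Fintype.card ι := by
  unfold laplacianSymbol
  rw [integral_finsetSum _ fun j _ => Continuous.integrableOn_brillouinZone (by fun_prop)]
  simp only [setIntegral_one_sub_cos_brillouinZone, Finset.sum_const, Finset.card_univ,
    nsmul_eq_mul]

variable [Nonempty ι]

theorem laplacianSymbol_lt_card {p : ι → ℝ} (hp : ‖p‖ < π / 2) :
    laplacianSymbol p < Fintype.card ι := by
  calc laplacianSymbol p < ∑ _ : ι, (1 : ℝ) := by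
        refine Finset.sum_lt_sum_of_nonempty Finset.univ_nonempty fun j _ => ?_
        have := (norm_le_pi_norm p j).trans_lt hp
        rw [Real.norm_eq_abs, abs_lt] at this
        linarith [cos_pos_of_mem_Ioo this]
    _ = Fintype.card ι := by simp

theorem ae_laplacianSymbol_pos :
    ∀ᵐ p ∂volume.restrict (brillouinZone ι), 0 < laplacianSymbol p := by
  filter_upwards [ae_restrict_mem measurableSet_brillouinZone,
    ae_restrict_of_ae (Measure.ae_ne volume 0)] with p hp hp0
  exact laplacianSymbol_pos hp hp0

theorem not_laplacianSymbol_ae_eq_card :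
    ¬ laplacianSymbol =ᵐ[volume.restrict (brillouinZone ι)] fun _ => (Fintype.card ι : ℝ) := by
  intro h
  have hball : ∀ᵐ p ∂volume.restrict (Metric.ball (0 : ι → ℝ) (π / 2)), False := by
    filter_upwards [ae_restrict_of_ae_restrict_of_subset
      (ball_subset_brillouinZone (by linarith [pi_pos])) h,
      ae_restrict_mem measurableSet_ball] with p hp hp_ball
    exact (laplacianSymbol_lt_card (mem_ball_zero_iff.1 hp_ball)).ne hp
  rw [eventually_false_iff_eq_bot, ae_eq_bot, Measure.restrict_eq_zero] at hball
  exact (Metric.measure_ball_pos volume 0 (by positivity)).ne' hball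

end BrillouinZone

/-- For every `d ≥ 3`, one has `θ(d) > 1`, where
`θ(d) = (d / (2π)^d) ∫_{(-π,π]^d} dp / E(p)` and `E(p) = ∑_j (1 - cos p_j)`. -/
theorem one_lt_theta (d : ℕ) (hd : 3 ≤ d) :
    1 < ((d : ℝ) / (2 * Real.pi) ^ d) *
      ∫ p in (Set.univ.pi fun _ : Fin d => Set.Ioc (-Real.pi) Real.pi),
        1 / (∑ j : Fin d, (1 - Real.cos (p j))) := by
  have : Nonempty (Fin d) := ⟨⟨0, by omega⟩⟩
  have key := two_mul_measureReal_sub_integral_lt_sq_mul_integral_one_div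
    (μ := volume.restrict (brillouinZone (Fin d))) (c := d)
    continuous_laplacianSymbol.integrableOn_brillouinZone
    (integrableOn_one_div_laplacianSymbol (by rw [Fintype.card_fin]; omega))
    ae_laplacianSymbol_pos (by simpa using not_laplacianSymbol_ae_eq_card (ι := Fin d))
  rw [measureReal_restrict_apply_univ, measureReal_brillouinZone, setIntegral_laplacianSymbol,
    Fintype.card_fin] at key
  change 1 < _ * ∫ p in brillouinZone (Fin d), 1 / laplacianSymbol p
  have hd0 : (0 : ℝ) < d := by exact_mod_cast (by omega : 0 < d)
  rw [div_mul_eq_mul_div, one_lt_div (by positivity)]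
  exact lt_of_mul_lt_mul_left (by linarith) hd0.le
end

section
/- θ(d) → 1 as d → ∞; that is, the sequence d ↦ θ(d) = (d/(2π)^d) ∫_{(−π,π]^d} dp / E(p), defined for d ≥ 3, tends to 1 along the filter atTop. -/
/-!
Writing `1 / E = ∫₀^∞ e^{-tE} dt` and integrating coordinatewise (Tonelli) gives
`θ(d) = d ∫₀^∞ g(t)^d dt`, where `g(t) = (2π)⁻¹ ∫_{-π}^{π} e^{-t(1 - cos p)} dp = e^{-t} I₀(t)`
is `cosHeatKernel`. Since `e^x ≥ 1 + x` and `cos` has mean zero, `g(t) ≥ e^{-t}`, hence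
`θ(d) ≥ d ∫₀^∞ e^{-dt} dt = 1`. Conversely, for `c < 1`, `g(t) ≤ 1 - t + 2t² ≤ e^{-ct}` on
`(0, δ]` with `δ = (1 - c)/2`, so this range contributes at most `1/c`; beyond `δ` the decreasing
function `g` is at most `q = e^{-cδ} < 1`, and the Gaussian bound `g(t)² ≤ π/(8t)` makes `g⁴`
integrable, so the rest is `O(d q^d) → 0`.
-/

open MeasureTheory Real Filter Set Topology

lemma integrableOn_pow_of_le {α : Type*} [MeasurableSpace α] {μ : Measure α} {s : Set α}
    {f : α → ℝ} (hs : MeasurableSet s) (hf : AEStronglyMeasurable f (μ.restrict s))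
    (h0 : ∀ x ∈ s, 0 ≤ f x) (h1 : ∀ x ∈ s, f x ≤ 1) {k d : ℕ} (hkd : k ≤ d)
    (hk : IntegrableOn (fun x => f x ^ k) s μ) : IntegrableOn (fun x => f x ^ d) s μ := by
  refine hk.mono' (hf.pow d) ?_
  filter_upwards [ae_restrict_mem hs] with x hx
  rw [norm_pow, Real.norm_of_nonneg (h0 x hx)]
  exact pow_le_pow_of_le_one (h0 x hx) (h1 x hx) hkd

lemma integral_exp_neg_mul_Ioi_zero {b : ℝ} (hb : 0 < b) :
    ∫ t in Ioi (0 : ℝ), exp (-b * t) = b⁻¹ := by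
  rw [integral_exp_mul_Ioi (neg_neg_of_pos hb)]
  simp

lemma lintegral_exp_neg_mul_Ioi_zero {b : ℝ} (hb : 0 < b) :
    ∫⁻ t in Ioi (0 : ℝ), ENNReal.ofReal (exp (-b * t)) = ENNReal.ofReal b⁻¹ := by
  rw [← integral_exp_neg_mul_Ioi_zero hb, ofReal_integral_eq_lintegral_ofReal
    (exp_neg_integrableOn_Ioi 0 hb) (Eventually.of_forall fun t => (exp_pos _).le)]

section LaplaceAsymptotics

variable {g : ℝ → ℝ}

lemma one_le_mul_integral_pow (hlow : ∀ t > 0, exp (-t) ≤ g t) {d : ℕ} (hd : 0 < d)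
    (hint : IntegrableOn (fun t => g t ^ d) (Ioi 0)) :
    1 ≤ d * ∫ t in Ioi 0, g t ^ d := by
  have hd' : (0 : ℝ) < d := Nat.cast_pos.2 hd
  calc (1 : ℝ) = d * ∫ t in Ioi 0, exp (-d * t) := by
        rw [integral_exp_neg_mul_Ioi_zero hd', mul_inv_cancel₀ hd'.ne']
    _ ≤ d * ∫ t in Ioi 0, g t ^ d := by
        refine mul_le_mul_of_nonneg_left (setIntegral_mono_on (exp_neg_integrableOn_Ioi 0 hd')
          hint measurableSet_Ioi fun t ht => ?_) hd'.le
        rw [neg_mul, ← mul_neg, exp_nat_mul]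
        exact pow_le_pow_left₀ (exp_pos _).le (hlow t ht) d

lemma integral_Ioc_pow_le_inv {c δ : ℝ} (hc : 0 < c) (hnonneg : ∀ t > 0, 0 ≤ g t)
    (hnear : ∀ t ∈ Ioc 0 δ, g t ≤ exp (-(c * t))) {d : ℕ} (hd : 0 < d)
    (hint : IntegrableOn (fun t => g t ^ d) (Ioc 0 δ)) :
    ∫ t in Ioc 0 δ, g t ^ d ≤ (c * d)⁻¹ := by
  have hcd : 0 < c * d := mul_pos hc (Nat.cast_pos.2 hd)
  calc ∫ t in Ioc 0 δ, g t ^ d ≤ ∫ t in Ioc 0 δ, exp (-(c * d) * t) := by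
        refine setIntegral_mono_on hint
          ((exp_neg_integrableOn_Ioi 0 hcd).mono_set Ioc_subset_Ioi_self) measurableSet_Ioc
          fun t ht => ?_
        calc g t ^ d ≤ exp (-(c * t)) ^ d := pow_le_pow_left₀ (hnonneg t ht.1) (hnear t ht) d
          _ = exp (-(c * d) * t) := by rw [← exp_nat_mul]; ring_nf
    _ ≤ ∫ t in Ioi 0, exp (-(c * d) * t) :=
        setIntegral_mono_set (exp_neg_integrableOn_Ioi 0 hcd)
          (Eventually.of_forall fun t => (exp_pos _).le) Ioc_subset_Ioi_self.eventuallyLE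
    _ = (c * d)⁻¹ := integral_exp_neg_mul_Ioi_zero hcd

lemma integral_Ioi_pow_le {q δ : ℝ} (hδ : 0 < δ) (hanti : Antitone g)
    (hnonneg : ∀ t > 0, 0 ≤ g t) (hq : g δ ≤ q) {k d : ℕ} (hkd : k ≤ d)
    (hint : IntegrableOn (fun t => g t ^ d) (Ioi δ))
    (hk : IntegrableOn (fun t => g t ^ k) (Ioi 0)) :
    ∫ t in Ioi δ, g t ^ d ≤ q ^ (d - k) * ∫ t in Ioi 0, g t ^ k := by
  have hsub : Ioi δ ⊆ Ioi 0 := Ioi_subset_Ioi hδ.le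
  calc ∫ t in Ioi δ, g t ^ d ≤ ∫ t in Ioi δ, q ^ (d - k) * g t ^ k := by
        refine setIntegral_mono_on hint ((hk.mono_set hsub).const_mul _) measurableSet_Ioi
          fun t ht => ?_
        have hgt : 0 ≤ g t := hnonneg t (hsub ht)
        rw [← Nat.sub_add_cancel hkd, pow_add, Nat.add_sub_cancel]
        exact mul_le_mul_of_nonneg_right
          (pow_le_pow_left₀ hgt ((hanti (le_of_lt ht)).trans hq) _) (pow_nonneg hgt k)
    _ ≤ q ^ (d - k) * ∫ t in Ioi 0, g t ^ k := by
        rw [integral_const_mul]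
        refine mul_le_mul_of_nonneg_left (setIntegral_mono_set hk ?_ hsub.eventuallyLE)
          (pow_nonneg ((hnonneg δ hδ).trans hq) _)
        filter_upwards [ae_restrict_mem measurableSet_Ioi] with t ht
        exact pow_nonneg (hnonneg t ht) k

lemma mul_integral_pow_le {c δ : ℝ} (hc : 0 < c) (hδ : 0 < δ) (hanti : Antitone g)
    (hnonneg : ∀ t > 0, 0 ≤ g t) (hnear : ∀ t ∈ Ioc 0 δ, g t ≤ exp (-(c * t)))
    {k d : ℕ} (hd : 0 < d) (hkd : k ≤ d) (hint : IntegrableOn (fun t => g t ^ d) (Ioi 0))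
    (hk : IntegrableOn (fun t => g t ^ k) (Ioi 0)) :
    d * ∫ t in Ioi 0, g t ^ d ≤
      c⁻¹ + d * exp (-(c * δ)) ^ (d - k) * ∫ t in Ioi 0, g t ^ k := by
  have hsplit : ∫ t in Ioi 0, g t ^ d = (∫ t in Ioc 0 δ, g t ^ d) + ∫ t in Ioi δ, g t ^ d := by
    rw [← setIntegral_union (Ioc_disjoint_Ioi le_rfl) measurableSet_Ioi
      (hint.mono_set Ioc_subset_Ioi_self) (hint.mono_set (Ioi_subset_Ioi hδ.le)),
      Ioc_union_Ioi_eq_Ioi hδ.le]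
  calc d * ∫ t in Ioi 0, g t ^ d
      ≤ d * ((c * d)⁻¹ + exp (-(c * δ)) ^ (d - k) * ∫ t in Ioi 0, g t ^ k) := by
        rw [hsplit]
        gcongr
        · exact integral_Ioc_pow_le_inv hc hnonneg hnear hd (hint.mono_set Ioc_subset_Ioi_self)
        · exact integral_Ioi_pow_le hδ hanti hnonneg (hnear δ ⟨hδ, le_rfl⟩) hkd
            (hint.mono_set (Ioi_subset_Ioi hδ.le)) hk
    _ = c⁻¹ + d * exp (-(c * δ)) ^ (d - k) * ∫ t in Ioi 0, g t ^ k := by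
        field_simp

theorem tendsto_mul_integral_pow (hanti : Antitone g) (hlow : ∀ t > 0, exp (-t) ≤ g t)
    (hnear : ∀ c < 1, ∃ δ > 0, ∀ t ∈ Ioc 0 δ, g t ≤ exp (-(c * t))) {k : ℕ}
    (hk : IntegrableOn (fun t => g t ^ k) (Ioi 0)) :
    Tendsto (fun d : ℕ => d * ∫ t in Ioi 0, g t ^ d) atTop (𝓝 1) := by
  have hnonneg : ∀ t > 0, 0 ≤ g t := fun t ht => (exp_pos _).le.trans (hlow t ht)
  have hle_one : ∀ t > 0, g t ≤ 1 := by
    obtain ⟨δ, hδ, hδg⟩ := hnear 0 one_pos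
    intro t ht
    calc g t ≤ g (min t δ) := hanti (min_le_left t δ)
      _ ≤ exp (-(0 * min t δ)) := hδg _ ⟨lt_min ht hδ, min_le_right t δ⟩
      _ = 1 := by simp
  have hint : ∀ d, k ≤ d → IntegrableOn (fun t => g t ^ d) (Ioi 0) := fun d hkd =>
    integrableOn_pow_of_le measurableSet_Ioi hanti.measurable.aestronglyMeasurable hnonneg
      hle_one hkd hk
  have hlarge : ∀ᶠ d : ℕ in atTop, 0 < d ∧ k ≤ d :=
    (eventually_gt_atTop 0).and (eventually_ge_atTop k)
  refine tendsto_order.2 ⟨fun a ha => ?_, fun a ha => ?_⟩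
  · filter_upwards [hlarge] with d hd
    exact ha.trans_le (one_le_mul_integral_pow hlow hd.1 (hint d hd.2))
  · obtain ⟨c, hac, hc1⟩ := exists_between (inv_lt_one_of_one_lt₀ ha)
    have hc : 0 < c := (inv_pos.2 (one_pos.trans ha)).trans hac
    have hca : c⁻¹ < a := (inv_lt_comm₀ hc (one_pos.trans ha)).2 hac
    obtain ⟨δ, hδ, hδg⟩ := hnear c hc1
    have hq0 : 0 < exp (-(c * δ)) := exp_pos _
    have hq1 : exp (-(c * δ)) < 1 := exp_lt_one_iff.2 (neg_neg_of_pos (mul_pos hc hδ))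
    have htail : Tendsto (fun d : ℕ => d * exp (-(c * δ)) ^ (d - k) * ∫ t in Ioi 0, g t ^ k)
        atTop (𝓝 0) := by
      have := (tendsto_self_mul_const_pow_of_lt_one hq0.le hq1).mul_const
        ((exp (-(c * δ)) ^ k)⁻¹ * ∫ t in Ioi 0, g t ^ k)
      rw [zero_mul] at this
      refine this.congr' ?_
      filter_upwards [eventually_ge_atTop k] with d hd
      rw [pow_sub₀ _ hq0.ne' hd]
      ring
    filter_upwards [hlarge, htail.eventually_lt_const (sub_pos.2 hca)] with d hd hd'
    calc _ ≤ _ := mul_integral_pow_le hc hδ hanti hnonneg hδg hd.1 hd.2 (hint d hd.2) hk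
      _ < a := by linarith

end LaplaceAsymptotics

lemma exp_neg_le_one_sub_add_sq {y : ℝ} (hy : 0 ≤ y) : exp (-y) ≤ 1 - y + y ^ 2 := by
  have h : 1 ≤ (1 - y + y ^ 2) * exp y :=
    calc 1 ≤ (1 - y + y ^ 2) * (y + 1) := by nlinarith [pow_nonneg hy 3]
      _ ≤ (1 - y + y ^ 2) * exp y :=
        mul_le_mul_of_nonneg_left (add_one_le_exp y) (by nlinarith)
  rw [exp_neg, inv_le_iff_one_le_mul₀ (exp_pos y)]
  linarith

lemma integral_Ioc_add_mul_cos (a b : ℝ) : ∫ p in Ioc (-π) π, (a + b * cos p) = 2 * π * a := by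
  rw [← intervalIntegral.integral_of_le (neg_le_self pi_pos.le)]
  simp only [intervalIntegral.integral_add intervalIntegrable_const
    (intervalIntegral.intervalIntegrable_cos.const_mul b), intervalIntegral.integral_const,
    intervalIntegral.integral_const_mul, integral_cos, sin_pi, sin_neg, smul_eq_mul]
  ring

noncomputable def cosHeatKernel (t : ℝ) : ℝ :=
  (2 * π)⁻¹ * ∫ p in Ioc (-π) π, exp (-(t * (1 - cos p)))

lemma integrableOn_exp_neg_mul_one_sub_cos (t : ℝ) :
    IntegrableOn (fun p => exp (-(t * (1 - cos p)))) (Ioc (-π) π) :=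
  (by fun_prop : Continuous fun p => exp (-(t * (1 - cos p)))).integrableOn_Ioc

lemma le_cosHeatKernel {a b t : ℝ} (h : ∀ p, a + b * cos p ≤ exp (-(t * (1 - cos p)))) :
    a ≤ cosHeatKernel t := by
  have := setIntegral_mono_on (by fun_prop : Continuous fun p => a + b * cos p).integrableOn_Ioc
    (integrableOn_exp_neg_mul_one_sub_cos t) measurableSet_Ioc fun p _ => h p
  rw [integral_Ioc_add_mul_cos] at this
  rwa [cosHeatKernel, le_inv_mul_iff₀ (by positivity)]

lemma cosHeatKernel_le {a b t : ℝ} (h : ∀ p, exp (-(t * (1 - cos p))) ≤ a + b * cos p) :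
    cosHeatKernel t ≤ a := by
  have := setIntegral_mono_on (integrableOn_exp_neg_mul_one_sub_cos t)
    (by fun_prop : Continuous fun p => a + b * cos p).integrableOn_Ioc measurableSet_Ioc
    fun p _ => h p
  rw [integral_Ioc_add_mul_cos] at this
  rwa [cosHeatKernel, inv_mul_le_iff₀ (by positivity)]

lemma antitone_cosHeatKernel : Antitone cosHeatKernel := fun t s hts => by
  refine mul_le_mul_of_nonneg_left (setIntegral_mono_on
    (integrableOn_exp_neg_mul_one_sub_cos s) (integrableOn_exp_neg_mul_one_sub_cos t)
    measurableSet_Ioc fun p _ => ?_) (by positivity)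
  gcongr
  linarith [cos_le_one p]

lemma exp_neg_le_cosHeatKernel (t : ℝ) : exp (-t) ≤ cosHeatKernel t := by
  refine le_cosHeatKernel (b := t * exp (-t)) fun p => ?_
  calc exp (-t) + t * exp (-t) * cos p = exp (-t) * (t * cos p + 1) := by ring
    _ ≤ exp (-t) * exp (t * cos p) := by gcongr; exact add_one_le_exp _
    _ = exp (-(t * (1 - cos p))) := by rw [← exp_add]; ring_nf

lemma cosHeatKernel_nonneg (t : ℝ) : 0 ≤ cosHeatKernel t :=
  (exp_pos _).le.trans (exp_neg_le_cosHeatKernel t)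

lemma cosHeatKernel_le_one_sub_add_sq {t : ℝ} (ht : 0 ≤ t) :
    cosHeatKernel t ≤ 1 - t + 2 * t ^ 2 := by
  refine cosHeatKernel_le (b := t - 2 * t ^ 2) fun p => ?_
  have hy : 0 ≤ t * (1 - cos p) := mul_nonneg ht (by linarith [cos_le_one p])
  have hy2 : t * (1 - cos p) ≤ 2 * t := by nlinarith [neg_one_le_cos p]
  calc exp (-(t * (1 - cos p))) ≤ 1 - t * (1 - cos p) + (t * (1 - cos p)) ^ 2 :=
        exp_neg_le_one_sub_add_sq hy
    _ ≤ 1 - t * (1 - cos p) + 2 * t * (t * (1 - cos p)) := by nlinarith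
    _ = 1 - t + 2 * t ^ 2 + (t - 2 * t ^ 2) * cos p := by ring

lemma cosHeatKernel_le_exp_neg_mul {c t : ℝ} (ht : 0 ≤ t) (htc : 2 * t ≤ 1 - c) :
    cosHeatKernel t ≤ exp (-(c * t)) :=
  calc cosHeatKernel t ≤ 1 - t + 2 * t ^ 2 := cosHeatKernel_le_one_sub_add_sq ht
    _ ≤ exp (-t + 2 * t ^ 2) := by linarith [add_one_le_exp (-t + 2 * t ^ 2)]
    _ ≤ exp (-(c * t)) := by gcongr; nlinarith

lemma cosHeatKernel_sq_le {t : ℝ} (ht : 0 < t) : cosHeatKernel t ^ 2 ≤ π / (8 * t) := by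
  have hb : 0 < 2 * t / π ^ 2 := by positivity
  have hgauss : ∫ p in Ioc (-π) π, exp (-(t * (1 - cos p))) ≤ √(π / (2 * t / π ^ 2)) :=
    calc ∫ p in Ioc (-π) π, exp (-(t * (1 - cos p)))
        ≤ ∫ p in Ioc (-π) π, exp (-(2 * t / π ^ 2) * p ^ 2) := by
          refine setIntegral_mono_on (integrableOn_exp_neg_mul_one_sub_cos t)
            (integrable_exp_neg_mul_sq hb).integrableOn measurableSet_Ioc fun p hp => ?_
          have hcos := cos_le_one_sub_mul_cos_sq (abs_le.2 ⟨hp.1.le, hp.2⟩)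
          calc exp (-(t * (1 - cos p))) ≤ exp (-(t * (2 / π ^ 2 * p ^ 2))) := by
                gcongr; linarith
            _ = exp (-(2 * t / π ^ 2) * p ^ 2) := by ring_nf
      _ ≤ ∫ p, exp (-(2 * t / π ^ 2) * p ^ 2) :=
          setIntegral_le_integral (integrable_exp_neg_mul_sq hb)
            (Eventually.of_forall fun p => (exp_pos _).le)
      _ = √(π / (2 * t / π ^ 2)) := integral_gaussian _
  have h0 := cosHeatKernel_nonneg t
  calc cosHeatKernel t ^ 2 ≤ ((2 * π)⁻¹ * √(π / (2 * t / π ^ 2))) ^ 2 := by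
        gcongr
        exact mul_le_mul_of_nonneg_left hgauss (by positivity)
    _ = π / (8 * t) := by
        rw [mul_pow, sq_sqrt (by positivity)]
        field_simp
        ring

lemma integrableOn_cosHeatKernel_pow_four :
    IntegrableOn (fun t => cosHeatKernel t ^ 4) (Ioi 0) := by
  refine ((integrable_inv_one_add_sq.const_mul 2).integrableOn).mono'
    (antitone_cosHeatKernel.measurable.pow_const 4).aestronglyMeasurable ?_
  filter_upwards [ae_restrict_mem measurableSet_Ioi] with t (ht : 0 < t)
  have h0 := cosHeatKernel_nonneg t
  have h1 : cosHeatKernel t ≤ 1 := cosHeatKernel_le (b := 0) fun p => by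
    simpa using mul_nonneg ht.le (sub_nonneg.2 (cos_le_one p))
  have h2 : t * cosHeatKernel t ^ 2 ≤ π / 8 := by
    have := cosHeatKernel_sq_le ht
    rw [le_div_iff₀ (by positivity)] at this
    linarith
  rw [norm_pow, Real.norm_of_nonneg h0, ← div_eq_mul_inv, le_div_iff₀ (by positivity)]
  calc cosHeatKernel t ^ 4 * (1 + t ^ 2) = cosHeatKernel t ^ 4 + (t * cosHeatKernel t ^ 2) ^ 2 := by
        ring
    _ ≤ 1 + (π / 8) ^ 2 :=
        add_le_add (pow_le_one₀ h0 h1) (pow_le_pow_left₀ (by positivity) h2 2)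
    _ ≤ 2 := by nlinarith [pi_lt_four, pi_pos]

section Cube

variable {ι : Type*} [Fintype ι]

lemma integral_pi_Ioc_exp_neg_mul_sum_one_sub_cos (t : ℝ) :
    ∫ p in univ.pi fun _ : ι => Ioc (-π) π, exp (-(t * ∑ j, (1 - cos (p j)))) =
      (2 * π * cosHeatKernel t) ^ Fintype.card ι := by
  have h2π : 2 * π * cosHeatKernel t = ∫ p in Ioc (-π) π, exp (-(t * (1 - cos p))) := by
    rw [cosHeatKernel, ← mul_assoc, mul_inv_cancel₀ (by positivity), one_mul]
  simp_rw [h2π, Finset.mul_sum, ← Finset.sum_neg_distrib, exp_sum, volume_pi,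
    Measure.restrict_pi_pi]
  exact integral_fintype_prod_eq_pow fun p => exp (-(t * (1 - cos p)))

lemma ae_pos_sum_one_sub_cos [Nonempty ι] :
    ∀ᵐ p ∂(volume.restrict (univ.pi fun _ : ι => Ioc (-π) π)), 0 < ∑ j, (1 - cos (p j)) := by
  obtain ⟨i⟩ := ‹Nonempty ι›
  have hne : ∀ᵐ p : ι → ℝ, p i ≠ 0 := by
    rw [volume_pi]; exact Measure.ae_eval_ne (μ := fun _ : ι => (volume : Measure ℝ)) i 0
  filter_upwards [ae_restrict_of_ae hne, ae_restrict_mem (MeasurableSet.univ_pi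
    fun _ => measurableSet_Ioc)] with p hpi hp
  have hcos : cos (p i) < 1 := by
    have := hp i (mem_univ i)
    refine (cos_le_one _).lt_of_ne fun h => hpi ?_
    exact (cos_eq_one_iff_of_lt_of_lt (by linarith [this.1, pi_pos])
      (by linarith [this.2, pi_pos])).1 h
  exact Finset.sum_pos' (fun j _ => sub_nonneg.2 (cos_le_one _))
    ⟨i, Finset.mem_univ i, sub_pos.2 hcos⟩

lemma lintegral_pi_Ioc_exp_neg_sum_one_sub_cos_mul {t : ℝ} (ht : 0 ≤ t) :
    ∫⁻ p in univ.pi fun _ : ι => Ioc (-π) π,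
        ENNReal.ofReal (exp (-(∑ j, (1 - cos (p j))) * t)) =
      ENNReal.ofReal ((2 * π * cosHeatKernel t) ^ Fintype.card ι) := by
  have hcube : volume (univ.pi fun _ : ι => Ioc (-π) π) ≠ ⊤ := by
    simp [volume_pi_pi, Real.volume_Ioc]
  have hbound : ∀ p : ι → ℝ, ‖exp (-(∑ j, (1 - cos (p j))) * t)‖ ≤ 1 := fun p => by
    rw [Real.norm_of_nonneg (exp_pos _).le, exp_le_one_iff, neg_mul, neg_nonpos]
    exact mul_nonneg (Finset.sum_nonneg fun j _ => sub_nonneg.2 (cos_le_one _)) ht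
  rw [← ofReal_integral_eq_lintegral_ofReal
    (Measure.integrableOn_of_bounded hcube (by fun_prop : Continuous _).aestronglyMeasurable
      (Eventually.of_forall hbound))
    (Eventually.of_forall fun p => (exp_pos _).le),
    ← integral_pi_Ioc_exp_neg_mul_sum_one_sub_cos]
  simp_rw [neg_mul, mul_comm]

theorem integral_pi_Ioc_inv_sum_one_sub_cos [Nonempty ι] :
    ∫ p in univ.pi fun _ : ι => Ioc (-π) π, 1 / ∑ j, (1 - cos (p j)) =
      (2 * π) ^ Fintype.card ι * ∫ t in Ioi 0, cosHeatKernel t ^ Fintype.card ι := by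
  rw [integral_eq_lintegral_of_nonneg_ae (Eventually.of_forall fun p => one_div_nonneg.2
      (Finset.sum_nonneg fun j _ => sub_nonneg.2 (cos_le_one _)))
      (by fun_prop : Measurable _).aestronglyMeasurable,
    ← integral_const_mul, integral_eq_lintegral_of_nonneg_ae (ae_restrict_of_forall_mem
      measurableSet_Ioi fun t _ => by have := cosHeatKernel_nonneg t; positivity)
      ((antitone_cosHeatKernel.measurable.pow_const _).const_mul _).aestronglyMeasurable]
  congr 1
  calc ∫⁻ p in univ.pi fun _ : ι => Ioc (-π) π, ENNReal.ofReal (1 / ∑ j, (1 - cos (p j)))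
      = ∫⁻ p in univ.pi fun _ : ι => Ioc (-π) π, ∫⁻ t in Ioi 0,
          ENNReal.ofReal (exp (-(∑ j, (1 - cos (p j))) * t)) := by
        refine lintegral_congr_ae ?_
        filter_upwards [ae_pos_sum_one_sub_cos] with p hp
        rw [lintegral_exp_neg_mul_Ioi_zero hp, one_div]
    _ = ∫⁻ t in Ioi 0, ∫⁻ p in univ.pi fun _ : ι => Ioc (-π) π,
          ENNReal.ofReal (exp (-(∑ j, (1 - cos (p j))) * t)) :=
        lintegral_lintegral_swap (by fun_prop : Measurable _).aemeasurable
    _ = ∫⁻ t in Ioi 0,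
          ENNReal.ofReal ((2 * π) ^ Fintype.card ι * cosHeatKernel t ^ Fintype.card ι) :=
        setLIntegral_congr_fun measurableSet_Ioi fun t ht => by
          rw [lintegral_pi_Ioc_exp_neg_sum_one_sub_cos_mul (le_of_lt ht), mul_pow]

end Cube

/-- `θ(d) → 1` as `d → ∞`, where
`θ(d) = (d / (2π)^d) ∫_{(-π,π]^d} dp / E(p)` and `E(p) = ∑_j (1 - cos p_j)`. -/
theorem theta_tendsto_one :
    Tendsto
      (fun d : ℕ => ((d : ℝ) / (2 * Real.pi) ^ d) *
        ∫ p in (Set.univ.pi fun _ : Fin d => Set.Ioc (-Real.pi) Real.pi),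
          1 / (∑ j : Fin d, (1 - Real.cos (p j))))
      atTop (nhds 1) := by
  have hnear : ∀ c < 1, ∃ δ > 0, ∀ t ∈ Ioc 0 δ, cosHeatKernel t ≤ exp (-(c * t)) :=
    fun c hc => ⟨(1 - c) / 2, by linarith, fun t ht =>
      cosHeatKernel_le_exp_neg_mul ht.1.le (by linarith [ht.2])⟩
  refine (tendsto_mul_integral_pow antitone_cosHeatKernel (fun t _ => exp_neg_le_cosHeatKernel t)
    hnear integrableOn_cosHeatKernel_pow_four).congr' ?_
  filter_upwards [eventually_gt_atTop 0] with d hd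
  have : Nonempty (Fin d) := ⟨⟨0, hd⟩⟩
  rw [integral_pi_Ioc_inv_sum_one_sub_cos, Fintype.card_fin]
  field_simp
end

section
/- Fix n ∈ ℕ, n ≥ 1, and β > 0. Let D_{n,β} = { ζ = (ζ₁,…,ζ_n) ∈ ℂⁿ : 0 < Im ζ₁ < Im ζ₂ < ⋯ < Im ζ_n < β }, an open subset of ℂⁿ, and let D_{n,β}^{(0)} = { ζ ∈ closure(D_{n,β}) : Re ζ₁ = ⋯ = Re ζ_n = 0 }. If f₁, f₂ : ℂⁿ → ℂ are both continuous on the closure of D_{n,β}, analytic (complex differentiable) on D_{n,β}, and f₁ = f₂ on D_{n,β}^{(0)}, then f₁ = f₂ on the whole closure of D_{n,β}. -/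
open Complex

private lemma combo_lt' {x y x' y' a b : ℝ} (h : x < y) (h' : x' < y')
    (ha : 0 ≤ a) (hb : 0 ≤ b) (hab : a + b = 1) :
    a * x + b * x' < a * y + b * y' := by
  rcases ha.lt_or_eq with ha' | ha'
  · have h1 : a * x < a * y := by nlinarith
    have h2 : b * x' ≤ b * y' := by nlinarith
    linarith
  · have hb1 : b = 1 := by linarith
    simp [← ha', hb1, h']

/-- Let `D_{n,β} = {ζ ∈ ℂⁿ : 0 < Im ζ₁ < ⋯ < Im ζ_n < β}` and let
`D_{n,β}⁽⁰⁾` be the set of points of its closure with all real parts zero.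
Two functions that are continuous on the closure of `D_{n,β}`, analytic on
`D_{n,β}`, and equal on `D_{n,β}⁽⁰⁾` are equal on the whole closure. -/
theorem matsubara_determines_green
    (n : ℕ) (hn : 1 ≤ n) (β : ℝ) (hβ : 0 < β)
    (D : Set (Fin n → ℂ))
    (hD : D = {ζ : Fin n → ℂ |
      (∀ i : Fin n, 0 < (ζ i).im ∧ (ζ i).im < β) ∧
        StrictMono fun i : Fin n => (ζ i).im})
    (D₀ : Set (Fin n → ℂ))
    (hD₀ : D₀ = {ζ ∈ closure D | ∀ i : Fin n, (ζ i).re = 0})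
    (f₁ f₂ : (Fin n → ℂ) → ℂ)
    (hf₁c : ContinuousOn f₁ (closure D)) (hf₂c : ContinuousOn f₂ (closure D))
    (hf₁a : DifferentiableOn ℂ f₁ D) (hf₂a : DifferentiableOn ℂ f₂ D)
    (heq : Set.EqOn f₁ f₂ D₀) :
    Set.EqOn f₁ f₂ (closure D) := by
  have memD : ∀ ζ : Fin n → ℂ, ζ ∈ D ↔
      ((∀ i : Fin n, 0 < (ζ i).im ∧ (ζ i).im < β) ∧
        StrictMono fun i : Fin n => (ζ i).im) := by
    intro ζ; rw [hD]; exact Iff.rfl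
  -- D is open
  have hDopen : IsOpen D := by
    have hrep : D = (⋂ i : Fin n,
        ({ζ : Fin n → ℂ | 0 < (ζ i).im} ∩ {ζ : Fin n → ℂ | (ζ i).im < β})) ∩
        (⋂ i : Fin n, ⋂ j : Fin n,
          {ζ : Fin n → ℂ | i < j → (ζ i).im < (ζ j).im}) := by
      ext ζ
      simp only [memD, Set.mem_inter_iff, Set.mem_iInter, Set.mem_setOf_eq,
        Set.mem_inter_iff, StrictMono]
    rw [hrep]
    have hcont : ∀ i : Fin n, Continuous fun ζ : Fin n → ℂ => (ζ i).im :=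
      fun i => Complex.continuous_im.comp (continuous_apply i)
    refine IsOpen.inter (isOpen_iInter_of_finite fun i => ?_)
      (isOpen_iInter_of_finite fun i => isOpen_iInter_of_finite fun j => ?_)
    · exact (isOpen_lt continuous_const (hcont i)).inter
        (isOpen_lt (hcont i) continuous_const)
    · by_cases hij : i < j
      · have : {ζ : Fin n → ℂ | i < j → (ζ i).im < (ζ j).im}
            = {ζ : Fin n → ℂ | (ζ i).im < (ζ j).im} := by
          ext ζ; simp [hij]
        rw [this]; exact isOpen_lt (hcont i) (hcont j)
      · have : {ζ : Fin n → ℂ | i < j → (ζ i).im < (ζ j).im} = Set.univ := by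
          ext ζ; simp [hij]
        rw [this]; exact isOpen_univ
  -- D is convex
  have hDconv : Convex ℝ D := by
    intro x hx y hy a b ha hb hab
    rw [memD] at hx hy ⊢
    obtain ⟨hx1, hx2⟩ := hx; obtain ⟨hy1, hy2⟩ := hy
    have him : ∀ i : Fin n, ((a • x + b • y) i).im = a * (x i).im + b * (y i).im := by
      intro i
      simp [Pi.add_apply, Pi.smul_apply, Complex.add_im, smul_im, smul_eq_mul]
    constructor
    · intro i
      rw [him i]
      constructor
      · have := combo_lt' (hx1 i).1 (hy1 i).1 ha hb hab
        simpa using this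
      · have := combo_lt' (hx1 i).2 (hy1 i).2 ha hb hab
        have hβ' : a * β + b * β = β := by rw [← add_mul, hab, one_mul]
        linarith
    · intro i j hij
      simp only [him]
      exact combo_lt' (hx2 hij) (hy2 hij) ha hb hab
  -- key induction: purely imaginary from coordinate k on
  have key : ∀ k : ℕ, ∀ ζ : Fin n → ℂ, ζ ∈ D →
      (∀ i : Fin n, k ≤ (i : ℕ) → (ζ i).re = 0) → f₁ ζ = f₂ ζ := by
    intro k
    induction k with
    | zero =>
      intro ζ hζ h0
      apply heq
      rw [hD₀]
      exact ⟨subset_closure hζ, fun i => h0 i (Nat.zero_le _)⟩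
    | succ k ih =>
      intro ζ hζ h
      by_cases hk : k < n
      · -- the analytic step in coordinate k
        set j : Fin n := ⟨k, hk⟩ with hj
        set upd : ℂ → (Fin n → ℂ) := fun z => Function.update ζ j z with hupd
        have coord : ∀ (z : ℂ) (i : Fin n), upd z i = if i = j then z else ζ i :=
          fun z i => Function.update_apply ζ j z i
        have hupdc : Continuous upd := by
          apply continuous_pi
          intro i
          have : (fun z => upd z i) = fun z => if i = j then z else ζ i :=
            funext fun z => coord z i
          rw [this]
          split_ifs
          · exact continuous_id
          · exact continuous_const
        have hupdd : Differentiable ℂ upd := by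
          apply differentiable_pi.mpr
          intro i
          have : (fun z => upd z i) = fun z => if i = j then z else ζ i :=
            funext fun z => coord z i
          rw [this]
          split_ifs
          · exact differentiable_id
          · exact differentiable_const _
        set U : Set ℂ := upd ⁻¹' D with hU
        have hUopen : IsOpen U := hDopen.preimage hupdc
        have hUconv : Convex ℝ U := by
          intro z hz w hw a b ha hb hab
          have hkey : upd (a • z + b • w) = a • upd z + b • upd w := by
            funext i
            simp only [coord, Pi.add_apply, Pi.smul_apply]
            split_ifs with hij
            · rfl
            · rw [← add_smul, hab, one_smul]
          show upd (a • z + b • w) ∈ D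
          rw [hkey]
          exact hDconv hz hw ha hb hab
        have hmaps : Set.MapsTo upd U D := fun z hz => hz
        have hg₁a : AnalyticOnNhd ℂ (f₁ ∘ upd) U :=
          (hf₁a.comp hupdd.differentiableOn hmaps).analyticOnNhd hUopen
        have hg₂a : AnalyticOnNhd ℂ (f₂ ∘ upd) U :=
          (hf₂a.comp hupdd.differentiableOn hmaps).analyticOnNhd hUopen
        set z₀ : ℂ := ((ζ j).im : ℂ) * Complex.I with hz₀def
        have hz₀im : z₀.im = (ζ j).im := by simp [hz₀def]
        have hz₀re : z₀.re = 0 := by simp [hz₀def]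
        have hz₀U : z₀ ∈ U := by
          show upd z₀ ∈ D
          rw [memD] at hζ ⊢
          have him : ∀ i : Fin n, (upd z₀ i).im = (ζ i).im := by
            intro i
            rw [coord]
            split_ifs with hij
            · rw [hij, hz₀im]
            · rfl
          refine ⟨fun i => him i ▸ hζ.1 i, ?_⟩
          have : (fun i => (upd z₀ i).im) = fun i => (ζ i).im := funext him
          rw [this]
          exact hζ.2
        -- the sequence approaching z₀ along the imaginary axis
        set u : ℕ → ℂ := fun m => z₀ + (1 / (m + 1) : ℝ) • Complex.I with hu
        have hure : ∀ m, (u m).re = 0 := by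
          intro m
          simp only [hu]
          rw [Complex.add_re, smul_re, Complex.I_re, smul_eq_mul, mul_zero, hz₀re, add_zero]
        have huim : ∀ m, (u m).im = z₀.im + 1 / (m + 1) := by
          intro m
          simp only [hu]
          rw [Complex.add_im, smul_im, Complex.I_im, smul_eq_mul, mul_one]
        have hune : ∀ m, u m ≠ z₀ := by
          intro m hm
          have := congrArg Complex.im hm
          rw [huim m] at this
          have hpos : (0 : ℝ) < 1 / (m + 1) := by positivity
          linarith
        have htend : Filter.Tendsto u Filter.atTop (nhds z₀) := by
          have h1 : Filter.Tendsto (fun m : ℕ => (1 / (m + 1) : ℝ)) Filter.atTop (nhds 0) :=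
            tendsto_one_div_add_atTop_nhds_zero_nat
          have h3 := h1.smul_const Complex.I
          have h4 := (tendsto_const_nhds :
            Filter.Tendsto (fun _ : ℕ => z₀) Filter.atTop (nhds z₀)).add h3
          simpa [hu] using h4
        have hmemU : ∀ᶠ m in Filter.atTop, u m ∈ U :=
          htend.eventually (hUopen.eventually_mem hz₀U)
        have hstep : ∀ m : ℕ, u m ∈ U → (f₁ ∘ upd) (u m) = (f₂ ∘ upd) (u m) := by
          intro m hm
          apply ih (upd (u m)) hm
          intro i hi
          rw [coord]
          split_ifs with hij
          · exact hure m
          · have hvalne : (i : ℕ) ≠ k := fun hv => hij (Fin.ext hv)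
            exact h i (by omega)
        have htend' : Filter.Tendsto u Filter.atTop (nhdsWithin z₀ {z₀}ᶜ) :=
          tendsto_nhdsWithin_of_tendsto_nhds_of_eventually_within u htend
            (Filter.Eventually.of_forall fun m =>
              Set.mem_compl_singleton_iff.mpr (hune m))
        have hfreq : ∃ᶠ z in nhdsWithin z₀ {z₀}ᶜ, (f₁ ∘ upd) z = (f₂ ∘ upd) z :=
          htend'.frequently ((hmemU.mono fun m hm => hstep m hm).frequently)
        have hEqU : Set.EqOn (f₁ ∘ upd) (f₂ ∘ upd) U :=
          hg₁a.eqOn_of_preconnected_of_frequently_eq hg₂a hUconv.isPreconnected hz₀U hfreq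
        have hζjU : ζ j ∈ U := by
          show upd (ζ j) ∈ D
          rw [show upd (ζ j) = ζ from Function.update_eq_self j ζ]
          exact hζ
        have := hEqU hζjU
        rwa [Function.comp_apply, Function.comp_apply,
          show upd (ζ j) = ζ from Function.update_eq_self j ζ] at this
      · -- vacuous case k ≥ n
        exact ih ζ hζ fun i hi => absurd i.isLt (by omega)
  -- equality on D
  have hEqD : Set.EqOn f₁ f₂ D := fun ζ hζ =>
    key n ζ hζ fun i hi => absurd i.isLt (by omega)
  -- extend to the closure by continuity
  intro ζ hζ
  have hne : (nhdsWithin ζ D).NeBot := mem_closure_iff_nhdsWithin_neBot.mp hζ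
  have ht₁ : Filter.Tendsto f₁ (nhdsWithin ζ D) (nhds (f₁ ζ)) :=
    (hf₁c ζ hζ).mono subset_closure
  have ht₂ : Filter.Tendsto f₂ (nhdsWithin ζ D) (nhds (f₂ ζ)) :=
    (hf₂c ζ hζ).mono subset_closure
  have heq' : f₁ =ᶠ[nhdsWithin ζ D] f₂ := by
    filter_upwards [eventually_mem_nhdsWithin] with x hx
    exact hEqD hx
  exact tendsto_nhds_unique (ht₁.congr' heq') ht₂
end

section
/- Let β > 0, m > 0, a > 0 and set Δ = √(a/m). Then the kernel S_β(τ,τ′) = (e^{−|τ−τ′|Δ} + e^{−(β−|τ−τ′|)Δ}) / (2√(ma)(1 − e^{−βΔ})) is positive semidefinite on [0,β]: for every n ∈ ℕ, every τ₁,…,τ_n ∈ [0,β] and every c₁,…,c_n ∈ ℝ, one has Σ_{i=1}^n Σ_{j=1}^n c_i c_j S_β(τ_i, τ_j) ≥ 0. -/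
/-!
Up to the positive factor `2Δ / (1 - e^{-βΔ})`, the propagator is the Gram kernel
`∫₀^β φ(s, v) φ(t, v) dv` of `φ(s, v) = e^{-Δ((s - v) mod β)}`: the periodic Ornstein–Uhlenbeck
process is a moving average of white noise on the circle of length `β`. A Gram kernel is positive
semidefinite because `∑ᵢ ∑ⱼ cᵢ cⱼ ∫ φ(τᵢ, ·) φ(τⱼ, ·) = ∫ (∑ᵢ cᵢ φ(τᵢ, ·))² ≥ 0`. The Gram integral
is computed by cutting `[0, β]` at `s ≤ t`: on the three pieces `φ(s, v) φ(t, v)` is `e^{2Δv}` times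
`e^{-Δ(s+t)}`, `e^{-Δ(s+t+β)}` and `e^{-Δ(s+t+2β)}` respectively.
-/

open Real MeasureTheory Set intervalIntegral

def IsPosSemidefKernel {α : Type*} (K : α → α → ℝ) (S : Set α) : Prop :=
  ∀ (n : ℕ) (τ : Fin n → α), (∀ i, τ i ∈ S) → ∀ c : Fin n → ℝ,
    0 ≤ ∑ i : Fin n, ∑ j : Fin n, c i * c j * K (τ i) (τ j)

namespace IsPosSemidefKernel

variable {α : Type*} {K L : α → α → ℝ} {S : Set α}

theorem const_mul (hK : IsPosSemidefKernel K S) {r : ℝ} (hr : 0 ≤ r) :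
    IsPosSemidefKernel (fun x y => r * K x y) S := by
  intro n τ hτ c
  simpa only [Finset.mul_sum, mul_left_comm r] using mul_nonneg hr (hK n τ hτ c)

theorem congr (hK : IsPosSemidefKernel K S) (h : ∀ x ∈ S, ∀ y ∈ S, K x y = L x y) :
    IsPosSemidefKernel L S := by
  intro n τ hτ c
  simpa only [h _ (hτ _) _ (hτ _)] using hK n τ hτ c

end IsPosSemidefKernel

theorem isPosSemidefKernel_integral_mul {α Ω : Type*} [MeasurableSpace Ω] {μ : Measure Ω}
    {f : α → Ω → ℝ} {S : Set α} (hf : ∀ x ∈ S, ∀ y ∈ S, Integrable (fun v => f x v * f y v) μ) :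
    IsPosSemidefKernel (fun x y => ∫ v, f x v * f y v ∂μ) S := by
  intro n τ hτ c
  have hint : ∀ i j, Integrable (fun v => c i * c j * (f (τ i) v * f (τ j) v)) μ :=
    fun i j => (hf _ (hτ i) _ (hτ j)).const_mul _
  calc 0 ≤ ∫ v, (∑ i, c i * f (τ i) v) ^ 2 ∂μ := integral_nonneg fun v => sq_nonneg _
    _ = ∫ v, ∑ i, ∑ j, c i * c j * (f (τ i) v * f (τ j) v) ∂μ := by
      congr 1 with v
      rw [sq, Finset.sum_mul_sum]
      exact Finset.sum_congr rfl fun i _ => Finset.sum_congr rfl fun j _ => by ring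
    _ = ∑ i, ∑ j, c i * c j * ∫ v, f (τ i) v * f (τ j) v ∂μ := by
      rw [integral_finsetSum _ fun i _ => integrable_finsetSum _ fun j _ => hint i j]
      refine Finset.sum_congr rfl fun i _ => ?_
      rw [integral_finsetSum _ fun j _ => hint i j]
      simp only [MeasureTheory.integral_const_mul]

theorem mul_integral_exp_mul_add (c d a b : ℝ) :
    c * ∫ x in a..b, exp (c * x + d) = exp (c * b + d) - exp (c * a + d) := by
  rw [← smul_eq_mul, smul_integral_comp_mul_add (fun x => exp x), integral_exp]

/-- `wrappedExp Δ β s v = e^{-Δ((s - v) mod β)}` for `s, v ∈ [0, β]`. -/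
noncomputable def wrappedExp (Δ β s v : ℝ) : ℝ :=
  exp (-Δ * (s - v + if v ≤ s then 0 else β))

section wrappedExp

variable {Δ β s t : ℝ}

theorem wrappedExp_mul_eqOn (hst : s ≤ t) :
    EqOn (fun v => wrappedExp Δ β s v * wrappedExp Δ β t v)
        (fun v => exp (2 * Δ * v + -Δ * (s + t))) (Ioo 0 s) ∧
      EqOn (fun v => wrappedExp Δ β s v * wrappedExp Δ β t v)
        (fun v => exp (2 * Δ * v + -Δ * (s + t + β))) (Ioo s t) ∧
      EqOn (fun v => wrappedExp Δ β s v * wrappedExp Δ β t v)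
        (fun v => exp (2 * Δ * v + -Δ * (s + t + 2 * β))) (Ioo t β) := by
  refine ⟨fun v hv => ?_, fun v hv => ?_, fun v hv => ?_⟩ <;> dsimp only <;>
    rw [wrappedExp, wrappedExp, ← exp_add]
  · rw [if_pos hv.2.le, if_pos (hv.2.le.trans hst)]
    ring_nf
  · rw [if_neg hv.1.not_ge, if_pos hv.2.le]
    ring_nf
  · rw [if_neg (hst.trans_lt hv.1).not_ge, if_neg hv.1.not_ge]
    ring_nf

theorem intervalIntegrable_wrappedExp_mul (hs : s ∈ Icc 0 β) (ht : t ∈ Icc 0 β) :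
    IntervalIntegrable (fun v => wrappedExp Δ β s v * wrappedExp Δ β t v) volume 0 β := by
  wlog hst : s ≤ t generalizing s t
  · simpa only [mul_comm] using this ht hs (le_of_not_ge hst)
  obtain ⟨h₁, h₂, h₃⟩ := wrappedExp_mul_eqOn (Δ := Δ) (β := β) hst
  have piece : ∀ {a b d : ℝ}, a ≤ b →
      EqOn (fun v => wrappedExp Δ β s v * wrappedExp Δ β t v)
        (fun v => exp (2 * Δ * v + d)) (Ioo a b) →
      IntervalIntegrable (fun v => wrappedExp Δ β s v * wrappedExp Δ β t v) volume a b :=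
    fun hab h => (by fun_prop : Continuous fun v => exp (2 * Δ * v + _)).intervalIntegrable _ _
      |>.congr_uIoo (uIoo_of_le hab ▸ h.symm)
  exact ((piece hs.1 h₁).trans (piece hst h₂)).trans (piece ht.2 h₃)

theorem mul_integral_wrappedExp_mul (hs : s ∈ Icc 0 β) (ht : t ∈ Icc 0 β) :
    2 * Δ * ∫ v in 0..β, wrappedExp Δ β s v * wrappedExp Δ β t v =
      (1 - exp (-β * Δ)) * (exp (-|s - t| * Δ) + exp (-(β - |s - t|) * Δ)) := by
  wlog hst : s ≤ t generalizing s t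
  · simpa only [abs_sub_comm, mul_comm (wrappedExp Δ β s _)] using this ht hs (le_of_not_ge hst)
  obtain ⟨h₁, h₂, h₃⟩ := wrappedExp_mul_eqOn (Δ := Δ) (β := β) hst
  have hP : ∀ {a b}, a ∈ Icc 0 β → b ∈ Icc 0 β →
      IntervalIntegrable (fun v => wrappedExp Δ β s v * wrappedExp Δ β t v) volume a b :=
    fun ha hb => (intervalIntegrable_wrappedExp_mul hs ht).mono_set
      (uIcc_subset_uIcc (Icc_subset_uIcc ha) (Icc_subset_uIcc hb))
  have piece : ∀ {a b d : ℝ}, a ≤ b →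
      EqOn (fun v => wrappedExp Δ β s v * wrappedExp Δ β t v)
        (fun v => exp (2 * Δ * v + d)) (Ioo a b) →
      2 * Δ * ∫ v in a..b, wrappedExp Δ β s v * wrappedExp Δ β t v =
        exp (2 * Δ * b + d) - exp (2 * Δ * a + d) :=
    fun hab h => by rw [integral_congr_Ioo_of_le hab h, mul_integral_exp_mul_add]
  have h0 : (0 : ℝ) ∈ Icc 0 β := ⟨le_rfl, hs.1.trans hs.2⟩
  rw [← integral_add_adjacent_intervals (hP h0 ht) (hP ht ⟨h0.2, le_rfl⟩),
    ← integral_add_adjacent_intervals (hP h0 hs) (hP hs ht), mul_add (2 * Δ), mul_add (2 * Δ),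
    piece hs.1 h₁, piece hst h₂, piece ht.2 h₃, abs_sub_comm, abs_of_nonneg (sub_nonneg.2 hst)]
  simp only [sub_mul, one_mul, mul_add, ← exp_add]
  ring_nf

end wrappedExp

/-- The harmonic propagator
`S_β(τ, τ′) = (e^{-|τ-τ′|Δ} + e^{-(β-|τ-τ′|)Δ}) / (2√(ma)(1 - e^{-βΔ}))`,
`Δ = √(a/m)`, is a positive semidefinite kernel on `[0, β]`. -/
theorem propagator_posSemidef
    (β m a : ℝ) (hβ : 0 < β) (hm : 0 < m) (ha : 0 < a) :
    let Δ : ℝ := Real.sqrt (a / m)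
    let S : ℝ → ℝ → ℝ := fun τ τ' =>
      (Real.exp (-|τ - τ'| * Δ) + Real.exp (-(β - |τ - τ'|) * Δ)) /
        (2 * Real.sqrt (m * a) * (1 - Real.exp (-β * Δ)))
    ∀ (n : ℕ) (τ : Fin n → ℝ), (∀ i, τ i ∈ Set.Icc 0 β) →
      ∀ c : Fin n → ℝ, 0 ≤ ∑ i : Fin n, ∑ j : Fin n, c i * c j * S (τ i) (τ j) := by
  intro Δ S
  have hΔ : 0 < Δ := sqrt_pos.2 (div_pos ha hm)
  have hq : 0 < 1 - exp (-β * Δ) := sub_pos.2 (exp_lt_one_iff.2 (by nlinarith))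
  have hma : 0 < √(m * a) := sqrt_pos.2 (mul_pos hm ha)
  have hgram : IsPosSemidefKernel
      (fun s t => ∫ v in Ioc 0 β, wrappedExp Δ β s v * wrappedExp Δ β t v) (Icc 0 β) :=
    isPosSemidefKernel_integral_mul fun s hs t ht =>
      (intervalIntegrable_iff_integrableOn_Ioc_of_le hβ.le).1 (intervalIntegrable_wrappedExp_mul hs ht)
  refine (hgram.const_mul (div_nonneg hΔ.le (by positivity :
    0 ≤ √(m * a) * (1 - exp (-β * Δ)) ^ 2))).congr fun s hs t ht => ?_
  have hgramInt := mul_integral_wrappedExp_mul (Δ := Δ) hs ht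
  rw [← integral_of_le hβ.le, div_mul_eq_mul_div, div_eq_div_iff (by positivity) (by positivity)]
  linear_combination √(m * a) * (1 - exp (-β * Δ)) * hgramInt
end
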